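/- Let F: ℂ → ℂ be smooth with sup_ℂ max(|∂F|, |∂̄F|) ≤ M₁ < ∞, and for ε ≥ 0 with 2εM₁ < 1 define F_ε implicitly by F_ε(w + εF(w)) = F(w) for all w (well-defined since z ↦ z + εF(z) is injective). Then sup_ℂ max(|∂F_ε|, |∂̄F_ε|) ≤ M₁/(1 − 2εM₁). -/

import Mathlib

/-- Wirtinger derivative `∂F = (∂_x F − i ∂_y F)/2`. -/
noncomputable def wd (F : ℂ → ℂ) (z : ℂ) : ℂ :=
  (fderiv ℝ F z 1 - Complex.I * fderiv ℝ F z Complex.I) / 2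

/-- Wirtinger derivative `∂̄F = (∂_x F + i ∂_y F)/2`. -/
noncomputable def wdbar (F : ℂ → ℂ) (z : ℂ) : ℂ :=
  (fderiv ℝ F z 1 + Complex.I * fderiv ℝ F z Complex.I) / 2

open Complex Set

lemma clm_apply_eq (L : ℂ →L[ℝ] ℂ) (v : ℂ) :
    L v = ((L 1 - Complex.I * L Complex.I) / 2) * v
      + ((L 1 + Complex.I * L Complex.I) / 2) * (starRingEnd ℂ) v := by
  set x := v.re with hx
  set y := v.im with hy
  have hv : v = (x : ℂ) + (y : ℂ) * Complex.I := (Complex.re_add_im v).symm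
  rw [hv]
  have hL : L ((x : ℂ) + (y : ℂ) * Complex.I) = (x : ℂ) * L 1 + (y : ℂ) * L Complex.I := by
    rw [show ((x : ℂ) + (y : ℂ) * Complex.I) = x • (1 : ℂ) + y • Complex.I by
      simp [Complex.real_smul]]
    rw [map_add, map_smul, map_smul, Complex.real_smul, Complex.real_smul]
  have hconj : (starRingEnd ℂ) ((x : ℂ) + (y : ℂ) * Complex.I)
      = (x : ℂ) - (y : ℂ) * Complex.I := by
    simp [map_add, map_mul, Complex.conj_I]; ring
  rw [hL, hconj]
  linear_combination (y : ℂ) * L Complex.I * Complex.I_mul_I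

-- operator norm bound from Wirtinger bounds
lemma clm_norm_le (L : ℂ →L[ℝ] ℂ) (M : ℝ) (hM : 0 ≤ M)
    (h1 : ‖(L 1 - Complex.I * L Complex.I) / 2‖ ≤ M)
    (h2 : ‖(L 1 + Complex.I * L Complex.I) / 2‖ ≤ M) :
    ‖L‖ ≤ 2 * M := by
  refine ContinuousLinearMap.opNorm_le_bound L (by positivity) fun v => ?_
  rw [clm_apply_eq L v]
  calc ‖((L 1 - Complex.I * L Complex.I) / 2) * v
      + ((L 1 + Complex.I * L Complex.I) / 2) * (starRingEnd ℂ) v‖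
      ≤ ‖((L 1 - Complex.I * L Complex.I) / 2) * v‖
        + ‖((L 1 + Complex.I * L Complex.I) / 2) * (starRingEnd ℂ) v‖ := norm_add_le _ _
    _ ≤ M * ‖v‖ + M * ‖v‖ := by
        rw [norm_mul, norm_mul]
        gcongr
        · simpa [map_div₀] using h1
    _ = 2 * M * ‖v‖ := by ring

lemma wirt_coeffs(L : ℂ →L[ℝ] ℂ) (x y : ℂ)
    (h : ∀ v, L v = x * v + y * (starRingEnd ℂ) v) :
    (L 1 - Complex.I * L Complex.I) / 2 = x ∧ (L 1 + Complex.I * L Complex.I) / 2 = y := by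
  have h1 := h 1
  have hI := h Complex.I
  rw [show (starRingEnd ℂ) (1 : ℂ) = 1 from by simp, mul_one, mul_one] at h1
  rw [Complex.conj_I] at hI
  constructor
  · rw [h1, hI]; linear_combination ((y - x) / 2) * Complex.I_mul_I
  · rw [h1, hI]; linear_combination ((x - y) / 2) * Complex.I_mul_I

/-- If `F` is smooth with `max(|∂F|, |∂̄F|) ≤ M₁` everywhere and `F_ε` is the transported
function, `F_ε(w + εF(w)) = F(w)`, then for `2εM₁ < 1` one has
`max(|∂F_ε|, |∂̄F_ε|) ≤ M₁/(1 − 2εM₁)` everywhere. -/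
theorem stmt19 (F Fε : ℂ → ℂ) (hF : ContDiff ℝ (⊤ : ℕ∞) F) (M₁ : ℝ)
    (hbd : ∀ z : ℂ, ‖wd F z‖ ≤ M₁ ∧ ‖wdbar F z‖ ≤ M₁)
    (ε : ℝ) (hε0 : 0 ≤ ε) (hε : 2 * ε * M₁ < 1)
    (hFε : ∀ w : ℂ, Fε (w + (ε : ℂ) * F w) = F w) :
    ∀ z : ℂ, ‖wd Fε z‖ ≤ M₁ / (1 - 2 * ε * M₁) ∧
      ‖wdbar Fε z‖ ≤ M₁ / (1 - 2 * ε * M₁) := by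
  have hM0 : 0 ≤ M₁ := le_trans (norm_nonneg _) (hbd 0).1
  have hFd : Differentiable ℝ F := hF.differentiable (by simp)
  set G : ℂ → ℂ := fun w => w + (ε : ℂ) * F w with hGdef
  -- Wirtinger representation of fderiv of F
  have hAbd : ∀ w : ℂ, ‖fderiv ℝ F w‖ ≤ 2 * M₁ := fun w =>
    clm_norm_le _ _ hM0 (hbd w).1 (hbd w).2
  -- Lipschitz estimate for F
  have hlip : ∀ x y : ℂ, ‖F x - F y‖ ≤ 2 * M₁ * ‖x - y‖ := fun x y =>
    Convex.norm_image_sub_le_of_norm_fderiv_le (fun u _ => hFd u) (fun u _ => hAbd u)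
      convex_univ (mem_univ y) (mem_univ x)
  -- G approximates the identity
  have happrox : ApproximatesLinearOn G
      ((ContinuousLinearEquiv.refl ℝ ℂ : ℂ ≃L[ℝ] ℂ) : ℂ →L[ℝ] ℂ) univ
      (Real.toNNReal (2 * ε * M₁)) := by
    intro x _ y _
    have h1 : G x - G y - (ContinuousLinearEquiv.refl ℝ ℂ : ℂ →L[ℝ] ℂ) (x - y)
        = (ε : ℂ) * (F x - F y) := by
      simp [hGdef]; ring
    rw [h1]
    have : ‖(ε : ℂ) * (F x - F y)‖ = ε * ‖F x - F y‖ := by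
      rw [norm_mul, Complex.norm_real, Real.norm_of_nonneg hε0]
    rw [this, Real.coe_toNNReal _ (by positivity)]
    calc ε * ‖F x - F y‖ ≤ ε * (2 * M₁ * ‖x - y‖) := by
          gcongr; exact hlip x y
      _ = 2 * ε * M₁ * ‖x - y‖ := by ring
  have hcc : Subsingleton ℂ ∨ (Real.toNNReal (2 * ε * M₁) : NNReal)
      < ‖(((ContinuousLinearEquiv.refl ℝ ℂ).symm : ℂ ≃L[ℝ] ℂ) : ℂ →L[ℝ] ℂ)‖₊⁻¹ := by
    right
    have : ‖(((ContinuousLinearEquiv.refl ℝ ℂ).symm : ℂ ≃L[ℝ] ℂ) : ℂ →L[ℝ] ℂ)‖₊ = 1 := by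
      simp [ContinuousLinearEquiv.refl_symm]
    rw [this, inv_one]
    rw [← Real.toNNReal_one]
    exact (Real.toNNReal_lt_toNNReal_iff one_pos).mpr hε
  set H := happrox.toHomeomorph G hcc with hHdef
  have hHcoe : ∀ y, H y = G y := fun y => rfl
  have hGsymm : ∀ y : ℂ, G (H.symm y) = y := fun y => by
    rw [← hHcoe]; exact H.apply_symm_apply y
  intro z
  set w := H.symm z with hwdef
  set A := fderiv ℝ F w with hAdef
  set a := wd F w with hadef
  set b := wdbar F w with hbdef
  have ha : ‖a‖ ≤ M₁ := (hbd w).1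
  have hb : ‖b‖ ≤ M₁ := (hbd w).2
  have hAv : ∀ v, A v = a * v + b * (starRingEnd ℂ) v := by
    intro v
    rw [hadef, hbdef]; unfold wd wdbar; rw [← hAdef]
    exact clm_apply_eq A v
  set p := 1 + (ε : ℂ) * a with hpdef
  set q := (ε : ℂ) * b with hqdef
  set D := p * (starRingEnd ℂ) p - q * (starRingEnd ℂ) q with hDdef
  have habsq : ‖q‖ ≤ ε * M₁ := by
    rw [hqdef, norm_mul, Complex.norm_real, Real.norm_of_nonneg hε0]
    exact mul_le_mul_of_nonneg_left hb hε0
  have habsea : ‖(ε : ℂ) * a‖ ≤ ε * M₁ := by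
    rw [norm_mul, Complex.norm_real, Real.norm_of_nonneg hε0]
    exact mul_le_mul_of_nonneg_left ha hε0
  have habsp : 1 - ε * M₁ ≤ ‖p‖ := by
    have h1 : (1 : ℝ) = ‖p - (ε : ℂ) * a‖ := by
      rw [hpdef]; norm_num
    have h2 : ‖p - (ε : ℂ) * a‖ ≤ ‖p‖ + ‖(ε : ℂ) * a‖ := by
      simpa [sub_eq_add_neg] using norm_add_le p (-((ε : ℂ) * a))
    linarith
  have hpos : 0 < 1 - 2 * ε * M₁ := by linarith
  have hεM : 0 ≤ ε * M₁ := mul_nonneg hε0 hM0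
  have hub : 1 - 2 * ε * M₁ ≤ ‖p‖ - ‖q‖ := by linarith
  have hpq0 : 0 < ‖p‖ + ‖q‖ := by
    have := norm_nonneg q; linarith
  have hDr : D = ((‖p‖ ^ 2 - ‖q‖ ^ 2 : ℝ) : ℂ) := by
    rw [hDdef, Complex.mul_conj, Complex.mul_conj]
    push_cast
    rw [Complex.normSq_eq_norm_sq, Complex.normSq_eq_norm_sq]
    push_cast; ring
  have hd2 : 0 < ‖p‖ ^ 2 - ‖q‖ ^ 2 := by nlinarith
  have habsD : ‖D‖ = (‖p‖ - ‖q‖)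
      * (‖p‖ + ‖q‖) := by
    rw [hDr, Complex.norm_real, Real.norm_of_nonneg (le_of_lt hd2)]; ring
  have hD0 : D ≠ 0 := by
    rw [hDr]
    exact_mod_cast ne_of_gt hd2
  have hDconj : (starRingEnd ℂ) D = D := by
    rw [hDdef]; simp only [map_sub, map_mul, Complex.conj_conj]; ring
  -- the inverse linear map
  set B : ℂ →L[ℝ] ℂ := D⁻¹ • (((starRingEnd ℂ) p) • ContinuousLinearMap.id ℝ ℂ
      - q • (Complex.conjCLE : ℂ ≃L[ℝ] ℂ).toContinuousLinearMap) with hBdef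
  have hBv : ∀ v, B v = ((starRingEnd ℂ) p * v - q * (starRingEnd ℂ) v) / D := by
    intro v
    rw [hBdef]
    simp only [ContinuousLinearMap.smul_apply, ContinuousLinearMap.sub_apply,
      ContinuousLinearMap.smul_apply, ContinuousLinearMap.id_apply,
      ContinuousLinearEquiv.coe_coe, smul_eq_mul]
    rw [show Complex.conjCLE v = (starRingEnd ℂ) v from rfl, div_eq_inv_mul]
  set G' : ℂ →L[ℝ] ℂ := ContinuousLinearMap.id ℝ ℂ + (ε : ℂ) • A with hG'def
  have hG'v : ∀ v, G' v = p * v + q * (starRingEnd ℂ) v := by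
    intro v
    rw [hG'def]
    simp only [ContinuousLinearMap.add_apply, ContinuousLinearMap.id_apply,
      ContinuousLinearMap.smul_apply, smul_eq_mul, hAv v, hpdef, hqdef]
    ring
  have h1 : Function.LeftInverse B G' := by
    intro v
    rw [hG'v v, hBv _]
    rw [div_eq_iff hD0, hDdef]
    simp only [map_add, map_mul, Complex.conj_conj]
    ring
  have h2 : Function.RightInverse B G' := by
    intro v
    rw [hBv v, hG'v _]
    rw [map_div₀, map_sub, map_mul, map_mul, Complex.conj_conj, Complex.conj_conj, hDconj]
    field_simp
    rw [hDdef]; ring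
  set E : ℂ ≃L[ℝ] ℂ := ContinuousLinearEquiv.equivOfInverse G' B h1 h2 with hEdef
  -- derivative of G at w
  have hGder : HasFDerivAt G (E : ℂ →L[ℝ] ℂ) w := by
    have hcoe : (E : ℂ →L[ℝ] ℂ) = G' := rfl
    rw [hcoe, hG'def]
    have h1 : HasFDerivAt (fun u : ℂ => u) (ContinuousLinearMap.id ℝ ℂ) w := hasFDerivAt_id w
    have h2 : HasFDerivAt (fun u : ℂ => (ε : ℂ) * F u) ((ε : ℂ) • A) w := by
      simpa [smul_eq_mul, Pi.smul_def, Complex.real_smul] using ((hFd w).hasFDerivAt).const_smul (ε : ℂ)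
    exact h1.add h2
  -- derivative of the inverse
  have hsymmder : HasFDerivAt (H.symm) ((E.symm : ℂ →L[ℝ] ℂ)) z := by
    apply HasFDerivAt.of_local_left_inverse (H.symm.continuous.continuousAt) hGder
    exact Filter.Eventually.of_forall hGsymm
  have hsymmB : HasFDerivAt (H.symm) B z := by
    have : (E.symm : ℂ →L[ℝ] ℂ) = B := by
      rw [hEdef, ContinuousLinearEquiv.symm_equivOfInverse]; rfl
    rwa [this] at hsymmder
  have hFεeq : Fε = fun y => F (H.symm y) := by
    funext y
    conv_lhs => rw [← hGsymm y]
    exact hFε _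
  have hFεder : HasFDerivAt Fε (A.comp B) z := by
    rw [hFεeq]
    exact HasFDerivAt.comp z ((hFd w).hasFDerivAt) hsymmB
  have hfder : fderiv ℝ Fε z = A.comp B := hFεder.fderiv
  -- compute the Wirtinger derivatives of Fε
  have hcomp : ∀ v, (A.comp B) v
      = ((a * (starRingEnd ℂ) p - b * (starRingEnd ℂ) q) / D) * v
        + ((b * p - a * q) / D) * (starRingEnd ℂ) v := by
    intro v
    rw [ContinuousLinearMap.comp_apply, hBv v, hAv _]
    rw [map_div₀, map_sub, map_mul, map_mul, Complex.conj_conj, Complex.conj_conj, hDconj]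
    field_simp
    ring
  have hwc := wirt_coeffs (A.comp B) _ _ hcomp
  have hwd : wd Fε z = (a * (starRingEnd ℂ) p - b * (starRingEnd ℂ) q) / D := by
    unfold wd; rw [hfder]; exact hwc.1
  have hwdbar : wdbar Fε z = (b * p - a * q) / D := by
    unfold wdbar; rw [hfder]; exact hwc.2
  -- final estimates
  have key : ∀ N : ℂ, ‖N‖ ≤ M₁ * (‖p‖ + ‖q‖) →
      ‖N / D‖ ≤ M₁ / (1 - 2 * ε * M₁) := by
    intro N hN
    rw [norm_div, habsD]
    calc ‖N‖ / ((‖p‖ - ‖q‖) * (‖p‖ + ‖q‖))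
        ≤ (M₁ * (‖p‖ + ‖q‖))
          / ((‖p‖ - ‖q‖) * (‖p‖ + ‖q‖)) := by
          exact (div_le_div_iff_of_pos_right (mul_pos (by linarith : (0:ℝ) < ‖p‖ - ‖q‖) hpq0)).mpr hN
      _ = M₁ / (‖p‖ - ‖q‖) := by
          rw [mul_div_mul_right _ _ (ne_of_gt hpq0)]
      _ ≤ M₁ / (1 - 2 * ε * M₁) := by gcongr
  constructor
  · rw [hwd]
    apply key
    calc ‖a * (starRingEnd ℂ) p - b * (starRingEnd ℂ) q‖
        ≤ ‖a * (starRingEnd ℂ) p‖ + ‖b * (starRingEnd ℂ) q‖ := by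
          simpa [sub_eq_add_neg] using
            norm_add_le (a * (starRingEnd ℂ) p) (-(b * (starRingEnd ℂ) q))
      _ ≤ M₁ * (‖p‖ + ‖q‖) := by
          rw [norm_mul, norm_mul, Complex.norm_conj, Complex.norm_conj, mul_add]
          gcongr <;> first | exact ha | exact hb | positivity
  · rw [hwdbar]
    apply key
    calc ‖b * p - a * q‖
        ≤ ‖b * p‖ + ‖a * q‖ := by
          simpa [sub_eq_add_neg] using norm_add_le (b * p) (-(a * q))
      _ ≤ M₁ * (‖p‖ + ‖q‖) := by
          rw [norm_mul, norm_mul, mul_add]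
          gcongr <;> first | exact ha | exact hb | positivity
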